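/- arXiv:1803.00225 — 8 statements merged into one kernel-verified Lean document; each statement's English description precedes it below -/
import Mathlib

section
/- Let E be a real inner product space, s : E → ℝ convex, R : E → ℝ differentiable with gradient ∇R Lipschitz continuous with constant L ≥ 0, c ∈ E, γ > 0, α > 0, and x ∈ E. Define H(y) = s(y) + R(y) + (γ/2)‖y − c‖². If x⁺ is a global minimizer of the prox-linear subproblem y ↦ s(y) + ⟨∇R(x), y − x⟩ + (α/2)‖y − x‖² + (γ/2)‖y − c‖², then H(x) ≥ H(x⁺) + (α + (γ − L)/2)‖x⁺ − x‖². (This is the sufficient-descent inequality for the prox-linear update of the output-layer block, used to prove global convergence of BCD with general smooth losses.) -/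
/-!
The prox-linear subproblem objective is `(α + γ)`-strongly convex, so its minimizer `x⁺` beats
every other point by at least `(α + γ)/2 ‖y - x⁺‖²`; at `y = x` this bounds `s x⁺ + ⟪∇R x, x⁺ - x⟫`
in terms of `s x`. The descent lemma replaces `R x + ⟪∇R x, x⁺ - x⟫` by `R x⁺` at a cost of
`L/2 ‖x⁺ - x‖²`.
-/

open Set Filter Topology

open scoped RealInnerProductSpace

section

variable {E : Type*} [NormedAddCommGroup E] [InnerProductSpace ℝ E]

theorem le_add_inner_add_of_lipschitz_gradient {f : E → ℝ} {f' : E → E} {L : ℝ}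
    (hf : ∀ y, HasFDerivAt f (innerSL ℝ (f' y)) y)
    (hLip : ∀ y z, ‖f' y - f' z‖ ≤ L * ‖y - z‖) (x y : E) :
    f y ≤ f x + ⟪f' x, y - x⟫ + L / 2 * ‖y - x‖ ^ 2 := by
  set d := y - x
  let φ : ℝ → ℝ := fun t ↦ f (x + t • d) - t * ⟪f' x, d⟫ - L / 2 * t ^ 2 * ‖d‖ ^ 2
  let φ' : ℝ → ℝ := fun t ↦ ⟪f' (x + t • d), d⟫ - ⟪f' x, d⟫ - L * t * ‖d‖ ^ 2
  have hφ : ∀ t, HasDerivAt φ (φ' t) t := by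
    intro t
    have hline : HasDerivAt (fun t : ℝ ↦ x + t • d) d t := by
      simpa using ((hasDerivAt_id t).smul_const d).const_add x
    have := (((hf _).comp_hasDerivAt t hline).sub ((hasDerivAt_id t).mul_const ⟪f' x, d⟫)).sub
      (((hasDerivAt_pow 2 t).const_mul (L / 2)).mul_const (‖d‖ ^ 2))
    refine this.congr_deriv ?_
    simp only [φ', innerSL_apply_apply]
    ring
  have hφ'_nonpos : ∀ t ∈ interior (Ici (0 : ℝ)), φ' t ≤ 0 := by
    intro t ht
    rw [interior_Ici] at ht
    have hinner : ⟪f' (x + t • d) - f' x, d⟫ ≤ L * t * ‖d‖ ^ 2 := calc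
      _ ≤ ‖f' (x + t • d) - f' x‖ * ‖d‖ := real_inner_le_norm _ _
      _ ≤ L * ‖x + t • d - x‖ * ‖d‖ := by gcongr; exact hLip _ _
      _ = L * t * ‖d‖ ^ 2 := by
        rw [add_sub_cancel_left, norm_smul, Real.norm_of_nonneg (le_of_lt ht)]; ring
    simp only [φ', ← inner_sub_left]
    linarith
  have hanti : AntitoneOn φ (Ici 0) :=
    antitoneOn_of_hasDerivWithinAt_nonpos (convex_Ici 0)
      (fun t _ ↦ (hφ t).continuousAt.continuousWithinAt)
      (fun t _ ↦ (hφ t).hasDerivWithinAt) hφ'_nonpos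
  have h10 : φ 1 ≤ φ 0 := hanti (mem_Ici.2 le_rfl) (mem_Ici.2 zero_le_one) zero_le_one
  simp only [φ, one_smul, zero_smul, add_zero, d, add_sub_cancel] at h10
  linarith

theorem StrongConvexOn.add_le_of_isMinOn {s : Set E} {m : ℝ} {f : E → ℝ} {x y : E}
    (hf : StrongConvexOn s m f) (hmin : IsMinOn f s y) (hx : x ∈ s) (hy : y ∈ s) :
    f y + m / 2 * ‖x - y‖ ^ 2 ≤ f x := by
  set K := m / 2 * ‖x - y‖ ^ 2
  have key : ∀ t ∈ Ioo (0 : ℝ) 1, f y + (1 - t) * K ≤ f x := by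
    rintro t ⟨ht0, ht1⟩
    have ht1' : 0 ≤ 1 - t := sub_nonneg.2 ht1.le
    have hconv := hf.2 hx hy ht0.le ht1' (add_sub_cancel t 1)
    have hle : f y ≤ f (t • x + (1 - t) • y) := hmin (hf.1 hx hy ht0.le ht1' (add_sub_cancel t 1))
    rw [smul_eq_mul, smul_eq_mul] at hconv
    refine le_of_mul_le_mul_left ?_ ht0
    linear_combination hle + hconv
  refine le_of_tendsto (f := fun t ↦ f y + (1 - t) * K) (x := 𝓝[>] (0 : ℝ)) ?_
    (by filter_upwards [Ioo_mem_nhdsGT one_pos] using key)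
  exact tendsto_nhdsWithin_of_tendsto_nhds <| Continuous.tendsto' (by fun_prop) _ _ (by simp)

noncomputable def proxLinearModel (s : E → ℝ) (g x : E) (α γ : ℝ) (c y : E) : ℝ :=
  s y + ⟪g, y - x⟫ + α / 2 * ‖y - x‖ ^ 2 + γ / 2 * ‖y - c‖ ^ 2

theorem ConvexOn.strongConvexOn_proxLinearModel {s : E → ℝ} (hs : ConvexOn ℝ univ s)
    (g x : E) (α γ : ℝ) (c : E) : StrongConvexOn univ (α + γ) (proxLinearModel s g x α γ c) := by
  rw [strongConvexOn_iff_convex]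
  -- removing `(α + γ)/2 ‖y‖²` leaves `s` plus an affine function of `y`
  have hlin := ((innerₛₗ ℝ (g - α • x - γ • c)).convexOn convex_univ).add_const
    (α / 2 * ‖x‖ ^ 2 + γ / 2 * ‖c‖ ^ 2 - ⟪g, x⟫)
  refine (hs.add hlin).congr fun y _ ↦ ?_
  simp only [proxLinearModel, Pi.add_apply, innerₛₗ_apply_apply, norm_sub_sq_real, inner_sub_left,
    inner_sub_right, real_inner_smul_left, real_inner_comm x y, real_inner_comm c y]
  ring

end

theorem proxlinear_sufficient_descent_general
    {E : Type*} [NormedAddCommGroup E] [InnerProductSpace ℝ E]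
    (s R : E → ℝ) (hs : ConvexOn ℝ Set.univ s)
    (R' : E → E) (hR : ∀ y : E, HasFDerivAt R (innerSL ℝ (R' y)) y)
    (L : ℝ) (hLip : ∀ y z : E, ‖R' y - R' z‖ ≤ L * ‖y - z‖)
    (c : E) (γ α : ℝ) (x xplus : E)
    (H : E → ℝ) (hH : ∀ y : E, H y = s y + R y + (γ / 2) * ‖y - c‖ ^ 2)
    (hmin : ∀ y : E,
      s xplus + (inner ℝ (R' x) (xplus - x) : ℝ) + (α / 2) * ‖xplus - x‖ ^ 2
          + (γ / 2) * ‖xplus - c‖ ^ 2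
        ≤ s y + (inner ℝ (R' x) (y - x) : ℝ) + (α / 2) * ‖y - x‖ ^ 2
          + (γ / 2) * ‖y - c‖ ^ 2) :
    H x ≥ H xplus + (α + (γ - L) / 2) * ‖xplus - x‖ ^ 2 := by
  have hmodel := (hs.strongConvexOn_proxLinearModel (R' x) x α γ c).add_le_of_isMinOn
    (fun y _ ↦ hmin y) (mem_univ x) (mem_univ xplus)
  have hdescent := le_add_inner_add_of_lipschitz_gradient hR hLip x xplus
  simp only [proxLinearModel, sub_self, inner_zero_right, norm_zero, norm_sub_rev x xplus] at hmodel
  rw [hH, hH]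
  linarith

/-- Sufficient-descent inequality for the prox-linear update:
if `s` is convex, `R` is differentiable with gradient `R'` (i.e. the Fréchet
derivative of `R` at `y` is `h ↦ ⟨R' y, h⟩`) and `R'` is `L`-Lipschitz, and
`x⁺` globally minimizes the prox-linear subproblem
`y ↦ s y + ⟨∇R x, y − x⟩ + (α/2)‖y − x‖² + (γ/2)‖y − c‖²`, then
`H x ≥ H x⁺ + (α + (γ − L)/2)‖x⁺ − x‖²` where `H y = s y + R y + (γ/2)‖y − c‖²`. -/
theorem proxlinear_sufficient_descent
    {E : Type*} [NormedAddCommGroup E] [InnerProductSpace ℝ E]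
    (s R : E → ℝ) (hs : ConvexOn ℝ Set.univ s)
    (R' : E → E) (hR : ∀ y : E, HasFDerivAt R (innerSL ℝ (R' y)) y)
    (L : ℝ) (hL : 0 ≤ L) (hLip : ∀ y z : E, ‖R' y - R' z‖ ≤ L * ‖y - z‖)
    (c : E) (γ α : ℝ) (hγ : 0 < γ) (hα : 0 < α) (x xplus : E)
    (H : E → ℝ) (hH : ∀ y : E, H y = s y + R y + (γ / 2) * ‖y - c‖ ^ 2)
    (hmin : ∀ y : E,
      s xplus + (inner ℝ (R' x) (xplus - x) : ℝ) + (α / 2) * ‖xplus - x‖ ^ 2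
          + (γ / 2) * ‖xplus - c‖ ^ 2
        ≤ s y + (inner ℝ (R' x) (y - x) : ℝ) + (α / 2) * ‖y - x‖ ^ 2
          + (γ / 2) * ‖y - c‖ ^ 2) :
    H x ≥ H xplus + (α + (γ - L) / 2) * ‖xplus - x‖ ^ 2 :=
  proxlinear_sufficient_descent_general s R hs R' hR L hLip c γ α x xplus H hH hmin
end

section
/- Let E, G be real normed vector spaces, (x_k)_{k≥0} a sequence in E, a > 0, b > 0, and (F_k)_{k≥0} a sequence of nonnegative real numbers satisfying the sufficient descent condition a‖x_k − x_{k−1}‖² ≤ F_{k−1} − F_k for all k ≥ 1. Suppose (g_k)_{k≥1} is a sequence in G satisfying the relative error bound ‖g_k‖ ≤ b‖x_k − x_{k−1}‖ for all k ≥ 1. Then for every K ≥ 1, (1/K) ∑_{k=1}^{K} ‖g_k‖² ≤ b² F_0 / (a K); in particular the averaged squared norms of (g_k) converge to 0 at the rate O(1/K). -/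
/-- `O(1/K)` rate of the averaged squared subgradient norms from the sufficient
descent condition and the relative error bound `‖g_k‖ ≤ b‖x_k − x_{k−1}‖`. -/
theorem averaged_subgradient_rate
    {E G : Type*} [NormedAddCommGroup E] [NormedSpace ℝ E]
    [NormedAddCommGroup G] [NormedSpace ℝ G]
    (x : ℕ → E) (a b : ℝ) (ha : 0 < a) (hb : 0 < b)
    (F : ℕ → ℝ) (hF : ∀ k, 0 ≤ F k)
    (hdesc : ∀ k : ℕ, 1 ≤ k → a * ‖x k - x (k - 1)‖ ^ 2 ≤ F (k - 1) - F k)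
    (g : ℕ → G) (hrel : ∀ k : ℕ, 1 ≤ k → ‖g k‖ ≤ b * ‖x k - x (k - 1)‖) :
    ∀ K : ℕ, 1 ≤ K →
      (1 / (K : ℝ)) * ∑ k ∈ Finset.Icc 1 K, ‖g k‖ ^ 2 ≤ b ^ 2 * F 0 / (a * K) := by
  intro K hK
  have hKpos : (0:ℝ) < K := by exact_mod_cast hK
  -- pointwise bound
  have hpt : ∀ k : ℕ, 1 ≤ k → ‖g k‖ ^ 2 ≤ (b ^ 2 / a) * (F (k - 1) - F k) := by
    intro k hk
    have h1 : ‖g k‖ ^ 2 ≤ b ^ 2 * ‖x k - x (k-1)‖ ^ 2 := by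
      have := hrel k hk
      calc ‖g k‖ ^ 2 ≤ (b * ‖x k - x (k-1)‖) ^ 2 := by
            apply sq_le_sq' _ this
            have : 0 ≤ b * ‖x k - x (k-1)‖ := by positivity
            linarith [norm_nonneg (g k)]
        _ = b ^ 2 * ‖x k - x (k-1)‖ ^ 2 := by ring
    have h2 := hdesc k hk
    have h3 : ‖x k - x (k-1)‖ ^ 2 ≤ (F (k-1) - F k) / a := by
      rw [le_div_iff₀ ha]; linarith
    calc ‖g k‖ ^ 2 ≤ b ^ 2 * ((F (k-1) - F k) / a) := by
          apply h1.trans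
          exact mul_le_mul_of_nonneg_left h3 (by positivity)
      _ = (b ^ 2 / a) * (F (k-1) - F k) := by ring
  have hsum : ∑ k ∈ Finset.Icc 1 K, ‖g k‖ ^ 2
      ≤ (b ^ 2 / a) * (F 0 - F K) := by
    have : ∑ k ∈ Finset.Icc 1 K, ‖g k‖ ^ 2
        ≤ ∑ k ∈ Finset.Icc 1 K, (b ^ 2 / a) * (F (k - 1) - F k) := by
      apply Finset.sum_le_sum
      intro k hk
      exact hpt k (Finset.mem_Icc.mp hk).1
    refine this.trans ?_
    rw [← Finset.mul_sum]
    apply le_of_eq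
    congr 1
    have : ∑ k ∈ Finset.Icc 1 K, (F (k - 1) - F k)
        = ∑ i ∈ Finset.range K, (F i - F (i + 1)) := by
      rw [show Finset.Icc 1 K = Finset.Ico 1 (K+1) by rfl, Finset.sum_Ico_eq_sum_range]
      simp [add_comm]
    rw [this, Finset.sum_range_sub' F]
  have hFK : F 0 - F K ≤ F 0 := by linarith [hF K]
  have : ∑ k ∈ Finset.Icc 1 K, ‖g k‖ ^ 2 ≤ (b ^ 2 / a) * F 0 := by
    refine hsum.trans ?_
    exact mul_le_mul_of_nonneg_left hFK (by positivity)
  rw [one_div, inv_mul_le_iff₀ hKpos]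
  calc ∑ k ∈ Finset.Icc 1 K, ‖g k‖ ^ 2 ≤ (b ^ 2 / a) * F 0 := this
    _ = K * (b ^ 2 * F 0 / (a * K)) := by field_simp
end

section
/- Let E be a real normed vector space, (x_k)_{k≥0} a sequence in E, a > 0, b > 0, and (F_k)_{k≥0} a sequence of real numbers with F_k > 0 and F_k ≤ F_{k−1} for all k ≥ 1, satisfying the sufficient descent condition a‖x_k − x_{k−1}‖² ≤ F_{k−1} − F_k for all k ≥ 1. Let φ : ℝ → ℝ be concave on (0, ∞) and differentiable with φ'(s) > 0 for all s > 0, and suppose the Kurdyka–Łojasiewicz-type inequality 1 ≤ b φ'(F_k) ‖x_k − x_{k−1}‖ holds for all k ≥ 1. Then for every k ≥ 2, a‖x_k − x_{k−1}‖² ≤ b‖x_{k−1} − x_{k−2}‖ · (φ(F_{k−1}) − φ(F_k)). -/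
/-- Chained KŁ inequality: under sufficient descent and the KŁ-type inequality
`1 ≤ b φ'(F_k) ‖x_k − x_{k−1}‖`, one has
`a‖x_k − x_{k−1}‖² ≤ b‖x_{k−1} − x_{k−2}‖ (φ(F_{k−1}) − φ(F_k))` for `k ≥ 2`. -/
theorem kl_chained_inequality
    {E : Type*} [NormedAddCommGroup E] [NormedSpace ℝ E]
    (x : ℕ → E) (a b : ℝ) (ha : 0 < a) (hb : 0 < b)
    (F : ℕ → ℝ) (hFpos : ∀ k : ℕ, 1 ≤ k → 0 < F k)
    (hFmono : ∀ k : ℕ, 1 ≤ k → F k ≤ F (k - 1))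
    (hdesc : ∀ k : ℕ, 1 ≤ k → a * ‖x k - x (k - 1)‖ ^ 2 ≤ F (k - 1) - F k)
    (φ : ℝ → ℝ) (hconc : ConcaveOn ℝ (Set.Ioi 0) φ)
    (hdiff : ∀ s : ℝ, 0 < s → DifferentiableAt ℝ φ s)
    (hderiv : ∀ s : ℝ, 0 < s → 0 < deriv φ s)
    (hKL : ∀ k : ℕ, 1 ≤ k → 1 ≤ b * deriv φ (F k) * ‖x k - x (k - 1)‖) :
    ∀ k : ℕ, 2 ≤ k →
      a * ‖x k - x (k - 1)‖ ^ 2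
        ≤ b * ‖x (k - 1) - x (k - 2)‖ * (φ (F (k - 1)) - φ (F k)) := by
  intro k hk
  have hk1 : 1 ≤ k := le_trans (by norm_num) hk
  have hk11 : 1 ≤ k - 1 := Nat.le_sub_one_of_lt hk
  have hk12 : k - 1 - 1 = k - 2 := by omega
  have hFk : 0 < F k := hFpos k hk1
  have hFk1 : 0 < F (k - 1) := hFpos (k - 1) hk11
  have hle : F k ≤ F (k - 1) := hFmono k hk1
  have hKL' : 1 ≤ b * deriv φ (F (k - 1)) * ‖x (k - 1) - x (k - 2)‖ := by
    have := hKL (k - 1) hk11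
    rwa [hk12] at this
  have hdpos : 0 < deriv φ (F (k - 1)) := hderiv _ hFk1
  have hgap : F (k - 1) - F k ≤ b * ‖x (k - 1) - x (k - 2)‖ * (φ (F (k - 1)) - φ (F k)) := by
    rcases eq_or_lt_of_le hle with heq | hlt
    · rw [← heq]
      simp
    · -- concavity: deriv φ (F (k-1)) ≤ slope φ (F k) (F (k-1))
      have hslope := hconc.deriv_le_slope (Set.mem_Ioi.mpr hFk) (Set.mem_Ioi.mpr hFk1)
        hlt (hdiff _ hFk1)
      rw [slope_def_field] at hslope
      have hsub : 0 < F (k - 1) - F k := sub_pos.mpr hlt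
      have h1 : deriv φ (F (k - 1)) * (F (k - 1) - F k) ≤ φ (F (k - 1)) - φ (F k) := by
        rw [← le_div_iff₀ hsub]
        exact hslope
      calc F (k - 1) - F k
          ≤ (b * deriv φ (F (k - 1)) * ‖x (k - 1) - x (k - 2)‖) * (F (k - 1) - F k) := by
            nlinarith
        _ = b * ‖x (k - 1) - x (k - 2)‖ * (deriv φ (F (k - 1)) * (F (k - 1) - F k)) := by ring
        _ ≤ b * ‖x (k - 1) - x (k - 2)‖ * (φ (F (k - 1)) - φ (F k)) := by
            have hbn : 0 ≤ b * ‖x (k - 1) - x (k - 2)‖ := by positivity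
            exact mul_le_mul_of_nonneg_left h1 hbn
  exact le_trans (hdesc k hk1) hgap
end

section
/- Let E be a real normed vector space, (x_k)_{k≥0} a sequence in E, a > 0, b > 0, and (F_k)_{k≥0} a sequence of real numbers with F_k > 0 and F_k ≤ F_{k−1} for all k ≥ 1, satisfying the sufficient descent condition a‖x_k − x_{k−1}‖² ≤ F_{k−1} − F_k for all k ≥ 1. Let φ : ℝ → ℝ be concave on (0, ∞) and differentiable with φ'(s) > 0 for all s > 0, and suppose 1 ≤ b φ'(F_k) ‖x_k − x_{k−1}‖ for all k ≥ 1. Then for every k ≥ 2, 2‖x_k − x_{k−1}‖ ≤ ‖x_{k−1} − x_{k−2}‖ + (b/a)(φ(F_{k−1}) − φ(F_k)). -/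
/-- Under sufficient descent and the KŁ-type inequality, for `k ≥ 2`:
`2‖x_k − x_{k−1}‖ ≤ ‖x_{k−1} − x_{k−2}‖ + (b/a)(φ(F_{k−1}) − φ(F_k))`. -/
theorem kl_two_step_inequality
    {E : Type*} [NormedAddCommGroup E] [NormedSpace ℝ E]
    (x : ℕ → E) (a b : ℝ) (ha : 0 < a) (hb : 0 < b)
    (F : ℕ → ℝ) (hFpos : ∀ k : ℕ, 1 ≤ k → 0 < F k)
    (hFmono : ∀ k : ℕ, 1 ≤ k → F k ≤ F (k - 1))
    (hdesc : ∀ k : ℕ, 1 ≤ k → a * ‖x k - x (k - 1)‖ ^ 2 ≤ F (k - 1) - F k)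
    (φ : ℝ → ℝ) (hconc : ConcaveOn ℝ (Set.Ioi 0) φ)
    (hdiff : ∀ s : ℝ, 0 < s → DifferentiableAt ℝ φ s)
    (hderiv : ∀ s : ℝ, 0 < s → 0 < deriv φ s)
    (hKL : ∀ k : ℕ, 1 ≤ k → 1 ≤ b * deriv φ (F k) * ‖x k - x (k - 1)‖) :
    ∀ k : ℕ, 2 ≤ k →
      2 * ‖x k - x (k - 1)‖
        ≤ ‖x (k - 1) - x (k - 2)‖ + (b / a) * (φ (F (k - 1)) - φ (F k)) := by
  intro k hk
  have hk1 : 1 ≤ k - 1 := by omega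
  have hk' : 1 ≤ k := by omega
  have hsub : k - 1 - 1 = k - 2 := by omega
  have hFk : 0 < F k := hFpos k hk'
  have hFk1 : 0 < F (k - 1) := hFpos (k - 1) hk1
  have hd' : 0 < deriv φ (F (k - 1)) := hderiv _ hFk1
  have hKL' := hKL (k - 1) hk1
  rw [hsub] at hKL'
  have hDnn : (0 : ℝ) ≤ ‖x (k - 1) - x (k - 2)‖ := norm_nonneg _
  have hΔnn : (0 : ℝ) ≤ ‖x k - x (k - 1)‖ := norm_nonneg _
  have hmono := hFmono k hk'
  have hdesc' := hdesc k hk'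
  have hmain : a * ‖x k - x (k - 1)‖ ^ 2 ≤
      b * ‖x (k - 1) - x (k - 2)‖ * (φ (F (k - 1)) - φ (F k)) ∧
      0 ≤ φ (F (k - 1)) - φ (F k) := by
    rcases eq_or_lt_of_le hmono with heq | hlt
    · have h0 : a * ‖x k - x (k - 1)‖ ^ 2 ≤ 0 := by rw [heq] at hdesc'; linarith
      have hz : ‖x k - x (k - 1)‖ = 0 := by
        by_contra h
        have hpos : 0 < ‖x k - x (k - 1)‖ := lt_of_le_of_ne hΔnn (Ne.symm h)
        nlinarith [mul_pos ha (pow_pos hpos 2)]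
      rw [heq, hz]
      simp
    · have hslope := hconc.deriv_le_slope (Set.mem_Ioi.2 hFk) (Set.mem_Ioi.2 hFk1)
        hlt (hdiff _ hFk1)
      rw [slope_def_field] at hslope
      have h1 : deriv φ (F (k - 1)) * (F (k - 1) - F k) ≤ φ (F (k - 1)) - φ (F k) := by
        rw [le_div_iff₀ (by linarith)] at hslope
        linarith
      have hphinn : 0 ≤ φ (F (k - 1)) - φ (F k) := by nlinarith
      constructor
      · -- a Δ² ≤ ΔF ≤ (b φ' D) ΔF = bD (φ' ΔF) ≤ bD Δφ
        have h2 : F (k - 1) - F k ≤ b * ‖x (k - 1) - x (k - 2)‖ *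
            (deriv φ (F (k - 1)) * (F (k - 1) - F k)) := by
          nlinarith
        have h3 : b * ‖x (k - 1) - x (k - 2)‖ * (deriv φ (F (k - 1)) * (F (k - 1) - F k)) ≤
            b * ‖x (k - 1) - x (k - 2)‖ * (φ (F (k - 1)) - φ (F k)) := by
          have := mul_nonneg hb.le hDnn
          nlinarith
        linarith
      · exact hphinn
  obtain ⟨hkey, hphinn⟩ := hmain
  have hc : 0 < b / a := div_pos hb ha
  have hkey' : ‖x k - x (k - 1)‖ ^ 2 ≤
      ‖x (k - 1) - x (k - 2)‖ * ((b / a) * (φ (F (k - 1)) - φ (F k))) := by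
    rw [div_mul_eq_mul_div, mul_div_assoc', le_div_iff₀ ha]
    nlinarith
  nlinarith [sq_nonneg (‖x (k - 1) - x (k - 2)‖ - (b / a) * (φ (F (k - 1)) - φ (F k))),
    sq_nonneg (2 * ‖x k - x (k - 1)‖ - ‖x (k - 1) - x (k - 2)‖ -
      (b / a) * (φ (F (k - 1)) - φ (F k))),
    mul_nonneg hc.le hphinn]
end

section
/- (Local finite length.) Let E be a real normed vector space, (x_k)_{k≥0} a sequence in E, a > 0, b > 0, and (F_k)_{k≥0} a sequence of real numbers with F_k > 0 and F_k ≤ F_{k−1} for all k ≥ 1, satisfying the sufficient descent condition a‖x_k − x_{k−1}‖² ≤ F_{k−1} − F_k for all k ≥ 1. Let φ : ℝ → ℝ be concave on (0, ∞), nonnegative on (0, ∞), and differentiable with φ'(s) > 0 for all s > 0, and suppose 1 ≤ b φ'(F_k) ‖x_k − x_{k−1}‖ for all k ≥ 1. Then for every K ≥ 1, ∑_{k=1}^{K} ‖x_k − x_{k−1}‖ ≤ 2√(F_0 / a) + (b/a) φ(F_0). Consequently ∑_{k=1}^{∞} ‖x_k − x_{k−1}‖ < ∞, so (x_k) is a Cauchy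 sequence and converges whenever E is complete. -/
/-! Concavity of `φ` gives `φ'(F k) (F k - F (k+1)) ≤ φ (F k) - φ (F (k+1))`. Combined with
sufficient descent and the KŁ inequality this yields
`‖x (k+1) - x k‖² ≤ ‖x k - x (k-1)‖ · (b/a) (φ (F k) - φ (F (k+1)))`, so by AM-GM twice a step
length is at most the previous one plus `(b/a) (φ (F k) - φ (F (k+1)))`. Summing, the `φ`-terms
telescope, and the first step length is at most `√(F 0 / a)` by descent. -/

open Finset

lemma ConcaveOn.deriv_mul_sub_le {S : Set ℝ} {f : ℝ → ℝ} {x y : ℝ} (hf : ConcaveOn ℝ S f)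
    (hx : x ∈ S) (hy : y ∈ S) (hxy : x ≤ y) (hfd : DifferentiableAt ℝ f y) :
    deriv f y * (y - x) ≤ f y - f x := by
  rcases hxy.eq_or_lt with rfl | hlt
  · simp
  · have hslope := hf.deriv_le_slope hx hy hlt hfd
    rwa [slope_def_field, le_div_iff₀ (sub_pos.mpr hlt)] at hslope

lemma Finset.sum_Icc_one_eq_sum_range {M : Type*} [AddCommMonoid M] (f : ℕ → M) (n : ℕ) :
    ∑ k ∈ Icc 1 n, f k = ∑ k ∈ range n, f (k + 1) := by
  rw [← Ico_add_one_right_eq_Icc, sum_Ico_eq_sum_range]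
  simp [add_comm]

lemma sum_range_le_of_two_mul_le_add_sub {d c : ℕ → ℝ} (hd : ∀ k, 0 ≤ d k) (hc : ∀ k, 0 ≤ c k)
    (h : ∀ k, 2 * d (k + 1) ≤ d k + (c k - c (k + 1))) (n : ℕ) :
    ∑ i ∈ range n, d i ≤ 2 * d 0 + c 0 := by
  have telescope : ∀ n, ∑ i ∈ range (n + 1), d i + d n ≤ 2 * d 0 + (c 0 - c n) := by
    intro n
    induction n with
    | zero => rw [sum_range_one]; linarith
    | succ n ih =>
      rw [sum_range_succ]
      linarith [h n]
  cases n with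
  | zero => simpa using add_nonneg (mul_nonneg zero_le_two (hd 0)) (hc 0)
  | succ n => linarith [telescope n, hd n, hc n]

lemma two_mul_le_add_of_descent_of_kl {S : Set ℝ} {φ : ℝ → ℝ} {a b u v d₀ d₁ : ℝ}
    (ha : 0 < a) (hb : 0 ≤ b) (hd₀ : 0 ≤ d₀) (hφ : ConcaveOn ℝ S φ) (hu : u ∈ S) (hv : v ∈ S)
    (hφ' : 0 < deriv φ u) (hdesc : a * d₁ ^ 2 ≤ u - v) (hkl : 1 ≤ b * deriv φ u * d₀) :
    2 * d₁ ≤ d₀ + b / a * (φ u - φ v) := by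
  have hvu : v ≤ u := by nlinarith [sq_nonneg d₁]
  have htangent : deriv φ u * (u - v) ≤ φ u - φ v :=
    hφ.deriv_mul_sub_le hv hu hvu (differentiableAt_of_deriv_ne_zero hφ'.ne')
  have hgap : 0 ≤ φ u - φ v := (mul_nonneg hφ'.le (sub_nonneg.2 hvu)).trans htangent
  refine two_mul_le_add_of_sq_le_mul hd₀ (by positivity) ?_
  calc d₁ ^ 2 = 1 * (a * d₁ ^ 2) / a := by field_simp
    _ ≤ b * deriv φ u * d₀ * (u - v) / a := by gcongr
    _ = b * d₀ * (deriv φ u * (u - v)) / a := by ring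
    _ ≤ b * d₀ * (φ u - φ v) / a := by gcongr
    _ = d₀ * (b / a * (φ u - φ v)) := by ring

theorem kl_finite_length_general
    {E : Type*} [NormedAddCommGroup E] [NormedSpace ℝ E]
    (x : ℕ → E) (a b : ℝ) (ha : 0 < a) (hb : 0 < b)
    (F : ℕ → ℝ) (hFpos : ∀ k : ℕ, 1 ≤ k → 0 < F k)
    (hdesc : ∀ k : ℕ, 1 ≤ k → a * ‖x k - x (k - 1)‖ ^ 2 ≤ F (k - 1) - F k)
    (φ : ℝ → ℝ) (hconc : ConcaveOn ℝ (Set.Ioi 0) φ)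
    (hnonneg : ∀ s : ℝ, 0 < s → 0 ≤ φ s)
    (hderiv : ∀ s : ℝ, 0 < s → 0 < deriv φ s)
    (hKL : ∀ k : ℕ, 1 ≤ k → 1 ≤ b * deriv φ (F k) * ‖x k - x (k - 1)‖) :
    (∀ K : ℕ, 1 ≤ K →
      ∑ k ∈ Finset.Icc 1 K, ‖x k - x (k - 1)‖
        ≤ 2 * Real.sqrt (F 0 / a) + (b / a) * φ (F 0)) ∧
    Summable (fun k : ℕ => ‖x (k + 1) - x k‖) ∧
    CauchySeq x := by
  have hF1 : 0 < F 1 := hFpos 1 le_rfl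
  have hFstep : 0 ≤ F 0 - F 1 :=
    (mul_nonneg ha.le (sq_nonneg _)).trans (hdesc 1 le_rfl)
  have hF0 : 0 < F 0 := by linarith
  have hstep : ∀ k, 2 * ‖x (k + 1 + 1) - x (k + 1)‖ ≤ ‖x (k + 1) - x k‖ +
      (b / a * φ (F (k + 1)) - b / a * φ (F (k + 1 + 1))) := fun k => by
    rw [← mul_sub]
    simpa using two_mul_le_add_of_descent_of_kl ha hb.le (norm_nonneg _) hconc
      (hFpos (k + 1) (by omega)) (hFpos (k + 2) (by omega)) (hderiv _ (hFpos (k + 1) (by omega)))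
      (hdesc (k + 2) (by omega)) (hKL (k + 1) (by omega))
  have hfirst : ‖x 1 - x 0‖ ≤ √(F 0 / a) := by
    rw [Real.le_sqrt (norm_nonneg _) (by positivity), le_div_iff₀ ha]
    simpa [mul_comm] using (hdesc 1 le_rfl).trans (by linarith)
  have hφ : φ (F 1) ≤ φ (F 0) := by
    have htangent := hconc.deriv_mul_sub_le hF1 hF0 (by linarith)
      (differentiableAt_of_deriv_ne_zero (hderiv _ hF0).ne')
    linarith [mul_nonneg (hderiv _ hF0).le hFstep]
  have hlen : ∀ n, ∑ k ∈ range n, ‖x (k + 1) - x k‖ ≤ 2 * √(F 0 / a) + b / a * φ (F 0) := by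
    intro n
    refine (sum_range_le_of_two_mul_le_add_sub (fun _ => norm_nonneg _)
      (fun k => mul_nonneg (div_nonneg hb.le ha.le) (hnonneg _ (hFpos (k + 1) (by omega))))
      hstep n).trans ?_
    gcongr
  have hsummable := summable_of_sum_range_le (fun _ => norm_nonneg _) hlen
  refine ⟨fun K _ => ?_, hsummable,
    cauchySeq_of_dist_le_of_summable _ (fun n => (dist_eq_norm' _ _).le) hsummable⟩
  rw [sum_Icc_one_eq_sum_range]
  simpa using hlen K

/-- Local finite length: under sufficient descent and the KŁ-type inequality,
`∑_{k=1}^K ‖x_k − x_{k−1}‖ ≤ 2√(F₀/a) + (b/a)φ(F₀)` for all `K ≥ 1`; hence the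
total length is finite and the sequence is Cauchy. -/
theorem kl_finite_length
    {E : Type*} [NormedAddCommGroup E] [NormedSpace ℝ E]
    (x : ℕ → E) (a b : ℝ) (ha : 0 < a) (hb : 0 < b)
    (F : ℕ → ℝ) (hFpos : ∀ k : ℕ, 1 ≤ k → 0 < F k)
    (hFmono : ∀ k : ℕ, 1 ≤ k → F k ≤ F (k - 1))
    (hdesc : ∀ k : ℕ, 1 ≤ k → a * ‖x k - x (k - 1)‖ ^ 2 ≤ F (k - 1) - F k)
    (φ : ℝ → ℝ) (hconc : ConcaveOn ℝ (Set.Ioi 0) φ)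
    (hnonneg : ∀ s : ℝ, 0 < s → 0 ≤ φ s)
    (hdiff : ∀ s : ℝ, 0 < s → DifferentiableAt ℝ φ s)
    (hderiv : ∀ s : ℝ, 0 < s → 0 < deriv φ s)
    (hKL : ∀ k : ℕ, 1 ≤ k → 1 ≤ b * deriv φ (F k) * ‖x k - x (k - 1)‖) :
    (∀ K : ℕ, 1 ≤ K →
      ∑ k ∈ Finset.Icc 1 K, ‖x k - x (k - 1)‖
        ≤ 2 * Real.sqrt (F 0 / a) + (b / a) * φ (F 0)) ∧
    Summable (fun k : ℕ => ‖x (k + 1) - x k‖) ∧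
    CauchySeq x :=
  kl_finite_length_general x a b ha hb F hFpos hdesc φ hconc hnonneg hderiv hKL
end

section
/- (Ball containment.) Let E be a real normed vector space, (x_k)_{k≥0} a sequence in E, a > 0, b > 0, and (F_k)_{k≥0} a sequence of real numbers with F_k > 0 and F_k ≤ F_{k−1} for all k ≥ 1, satisfying the sufficient descent condition a‖x_k − x_{k−1}‖² ≤ F_{k−1} − F_k for all k ≥ 1. Let φ : ℝ → ℝ be concave on (0, ∞), nonnegative on (0, ∞), and differentiable with φ'(s) > 0 for all s > 0, and suppose 1 ≤ b φ'(F_k) ‖x_k − x_{k−1}‖ for all k ≥ 1. If x* ∈ E and ρ > 0 satisfy the initialization condition (b/a) φ(F_0) + 3√(F_0 / a) + ‖x_0 − x*‖ < ρ, then ‖x_k − x*‖ ≤ ρ for every k ≥ 0 (i.e., all iterates remain in the closed ball of radius ρ centered at x*). -/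
/-- Ball containment: under sufficient descent and the KŁ-type inequality, if
`(b/a)φ(F₀) + 3√(F₀/a) + ‖x₀ − x*‖ < ρ`, then every iterate stays in the
closed ball of radius `ρ` around `x*`. -/
theorem kl_ball_containment
    {E : Type*} [NormedAddCommGroup E] [NormedSpace ℝ E]
    (x : ℕ → E) (a b : ℝ) (ha : 0 < a) (hb : 0 < b)
    (F : ℕ → ℝ) (hFpos : ∀ k : ℕ, 1 ≤ k → 0 < F k)
    (hFmono : ∀ k : ℕ, 1 ≤ k → F k ≤ F (k - 1))
    (hdesc : ∀ k : ℕ, 1 ≤ k → a * ‖x k - x (k - 1)‖ ^ 2 ≤ F (k - 1) - F k)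
    (φ : ℝ → ℝ) (hconc : ConcaveOn ℝ (Set.Ioi 0) φ)
    (hnonneg : ∀ s : ℝ, 0 < s → 0 ≤ φ s)
    (hdiff : ∀ s : ℝ, 0 < s → DifferentiableAt ℝ φ s)
    (hderiv : ∀ s : ℝ, 0 < s → 0 < deriv φ s)
    (hKL : ∀ k : ℕ, 1 ≤ k → 1 ≤ b * deriv φ (F k) * ‖x k - x (k - 1)‖)
    (xstar : E) (ρ : ℝ) (hρ : 0 < ρ)
    (hinit : (b / a) * φ (F 0) + 3 * Real.sqrt (F 0 / a) + ‖x 0 - xstar‖ < ρ) :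
    ∀ k : ℕ, ‖x k - xstar‖ ≤ ρ := by
  have hF0 : 0 < F 0 := by
    have h1 := hFpos 1 le_rfl
    have h2 := hFmono 1 le_rfl
    simpa using h1.trans_le h2
  -- φ is monotone on Ioi 0
  have hmono : StrictMonoOn φ (Set.Ioi 0) := by
    apply strictMonoOn_of_deriv_pos (convex_Ioi 0)
    · exact fun s hs => (hdiff s hs).continuousAt.continuousWithinAt
    · intro s hs
      rw [interior_Ioi] at hs
      exact hderiv s hs
  -- tangent-type inequality
  have tangent : ∀ s t : ℝ, 0 < t → t ≤ s →
      deriv φ s * (s - t) ≤ φ s - φ t := by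
    intro s t ht hts
    rcases eq_or_lt_of_le hts with h | h
    · simp [h]
    · have hs : 0 < s := ht.trans h
      have := hconc.deriv_le_slope (Set.mem_Ioi.2 ht) (Set.mem_Ioi.2 hs) h (hdiff s hs)
      rw [slope_def_field] at this
      have hst : 0 < s - t := by linarith
      calc deriv φ s * (s - t) ≤ (φ s - φ t) / (s - t) * (s - t) := by
            apply mul_le_mul_of_nonneg_right this hst.le
        _ = φ s - φ t := by field_simp
  -- key step inequality
  have key1 : ∀ m : ℕ, 2 * ‖x (m + 2) - x (m + 1)‖ ≤
      ‖x (m + 1) - x m‖ + (b / a) * (φ (F (m + 1)) - φ (F (m + 2))) := by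
    intro m
    have hF1 : 0 < F (m + 1) := hFpos _ (by omega)
    have hF2 : 0 < F (m + 2) := hFpos _ (by omega)
    have hle : F (m + 2) ≤ F (m + 1) := by
      have := hFmono (m + 2) (by omega); simpa using this
    have hd : a * ‖x (m + 2) - x (m + 1)‖ ^ 2 ≤ F (m + 1) - F (m + 2) := by
      have := hdesc (m + 2) (by omega); simpa using this
    have hk : 1 ≤ b * deriv φ (F (m + 1)) * ‖x (m + 1) - x m‖ := by
      have := hKL (m + 1) (by omega); simpa using this
    have htan := tangent (F (m + 1)) (F (m + 2)) hF2 hle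
    have hp : 0 < deriv φ (F (m + 1)) := hderiv _ hF1
    have hφΔ : 0 ≤ φ (F (m + 1)) - φ (F (m + 2)) := by
      rcases eq_or_lt_of_le hle with h | h
      · simp [h]
      · have := hmono (Set.mem_Ioi.2 hF2) (Set.mem_Ioi.2 hF1) h
        linarith
    set u := ‖x (m + 1) - x m‖ with hu
    set D := ‖x (m + 2) - x (m + 1)‖ with hD
    have hu0 : 0 ≤ u := norm_nonneg _
    have hD0 : 0 ≤ D := norm_nonneg _
    set v := φ (F (m + 1)) - φ (F (m + 2)) with hv
    -- F diff ≤ v * b * u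
    have h1 : F (m + 1) - F (m + 2) ≤ v * (b * u) := by
      have h2 : v ≤ v * (b * deriv φ (F (m + 1)) * u) :=
        le_mul_of_one_le_right hφΔ hk
      nlinarith
    have hD2 : a * D ^ 2 ≤ v * (b * u) := le_trans hd h1
    have hD2' : D ^ 2 ≤ (b / a * v) * u := by
      rw [div_mul_eq_mul_div, div_mul_eq_mul_div, le_div_iff₀ ha]
      nlinarith
    have hbv : 0 ≤ b / a * v := by positivity
    nlinarith [sq_nonneg (u - b / a * v), sq_nonneg (2 * D - u - b / a * v)]
  -- summed inequality
  have claim : ∀ m : ℕ,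
      (∑ k ∈ Finset.range (m + 1), ‖x (k + 1) - x k‖) + ‖x (m + 1) - x m‖ ≤
      2 * ‖x 1 - x 0‖ + (b / a) * (φ (F 1) - φ (F (m + 1))) := by
    intro m
    induction m with
    | zero => simp; ring_nf; simp
    | succ n ih =>
      rw [Finset.sum_range_succ]
      have := key1 n
      linarith
  -- triangle telescoping
  have tele : ∀ K : ℕ, ‖x K - xstar‖ ≤
      ‖x 0 - xstar‖ + ∑ k ∈ Finset.range K, ‖x (k + 1) - x k‖ := by
    intro K
    induction K with
    | zero => simp
    | succ n ih =>
      rw [Finset.sum_range_succ]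
      have : ‖x (n + 1) - xstar‖ ≤ ‖x (n + 1) - x n‖ + ‖x n - xstar‖ := by
        have := norm_sub_le_norm_sub_add_norm_sub (x (n + 1)) (x n) xstar
        linarith [norm_sub_le (x (n+1) - x n) (x n - xstar)]
      calc ‖x (n + 1) - xstar‖ ≤ ‖x n - xstar‖ + ‖x (n + 1) - x n‖ := by
            have := norm_sub_le_norm_sub_add_norm_sub (x (n + 1)) (x n) xstar
            linarith
        _ ≤ _ := by linarith
  -- bounds on the pieces
  have hF1pos : 0 < F 1 := hFpos 1 le_rfl
  have hF1le : F 1 ≤ F 0 := by simpa using hFmono 1 le_rfl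
  have hd1 : ‖x 1 - x 0‖ ≤ Real.sqrt (F 0 / a) := by
    have hd := hdesc 1 le_rfl
    simp only [Nat.sub_self] at hd
    apply Real.le_sqrt_of_sq_le
    rw [le_div_iff₀ ha]
    nlinarith [hF1pos]
  have hφle : φ (F 1) ≤ φ (F 0) := by
    rcases eq_or_lt_of_le hF1le with h | h
    · simp [h]
    · exact (hmono (Set.mem_Ioi.2 hF1pos) (Set.mem_Ioi.2 hF0) h).le
  intro k
  match k with
  | 0 =>
    have h1 : 0 ≤ (b / a) * φ (F 0) := by
      have := hnonneg (F 0) hF0; positivity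
    have h2 : 0 ≤ Real.sqrt (F 0 / a) := Real.sqrt_nonneg _
    linarith
  | (m + 1) =>
    have h1 := tele (m + 1)
    have h2 := claim m
    have h3 : 0 ≤ φ (F (m + 1)) := hnonneg _ (hFpos _ (by omega))
    have h4 : 0 ≤ ‖x (m + 1) - x m‖ := norm_nonneg _
    have hba : 0 ≤ b / a := by positivity
    have h5 : (∑ j ∈ Finset.range (m + 1), ‖x (j + 1) - x j‖) ≤
        2 * Real.sqrt (F 0 / a) + (b / a) * φ (F 0) := by
      have : (b / a) * (φ (F 1) - φ (F (m + 1))) ≤ (b / a) * φ (F 0) := by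
        apply mul_le_mul_of_nonneg_left _ hba
        linarith
      linarith
    have h6 : 0 ≤ Real.sqrt (F 0 / a) := Real.sqrt_nonneg _
    linarith
end

section
/- Let γ > 0, a > 0, and b < 0 with a + γb ≥ 0. Then γ(b − a)²/(1 + γ) ≤ a² if and only if γb ≥ −(√(γ(γ+1)) − γ)·a. Equivalently, for f(u) = (1/2)(max(0, u) − a)² + (γ/2)(u − b)², the candidate value f((a + γb)/(1 + γ)) = γ(b − a)²/(2(1 + γ)) does not exceed the candidate value f(b) = a²/2 exactly when γb ≥ −(√(γ(γ+1)) − γ)·a. -/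
/-- Threshold comparison in the case `a + γb ≥ 0`, `b < 0` of the ReLU-proximal
subproblem: `γ(b − a)²/(1 + γ) ≤ a²` iff `γb ≥ −(√(γ(γ+1)) − γ)a`; equivalently,
the candidate value `γ(b − a)²/(2(1 + γ))` does not exceed `a²/2` exactly when
`γb ≥ −(√(γ(γ+1)) − γ)a`. -/
theorem relu_prox_threshold (γ a b : ℝ) (hγ : 0 < γ) (ha : 0 < a) (hb : b < 0)
    (hab : 0 ≤ a + γ * b) :
    (γ * (b - a) ^ 2 / (1 + γ) ≤ a ^ 2 ↔
      -(Real.sqrt (γ * (γ + 1)) - γ) * a ≤ γ * b) ∧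
    (γ * (b - a) ^ 2 / (2 * (1 + γ)) ≤ a ^ 2 / 2 ↔
      -(Real.sqrt (γ * (γ + 1)) - γ) * a ≤ γ * b) := by
  set s := Real.sqrt (γ * (γ + 1)) with hs
  have hs0 : 0 ≤ s := Real.sqrt_nonneg _
  have hs2 : s ^ 2 = γ * (γ + 1) := Real.sq_sqrt (by nlinarith)
  have hγ1 : (0:ℝ) < 1 + γ := by linarith
  have key : γ * (b - a) ^ 2 ≤ (1 + γ) * a ^ 2 ↔ -(s - γ) * a ≤ γ * b := by
    constructor
    · intro h
      nlinarith [mul_nonneg hs0 ha.le, sq_nonneg (γ * (b - a) + s * a),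
        sq_nonneg (γ * (b - a) - s * a)]
    · intro h
      have h2 : 0 ≤ γ * (b - a) + s * a := by nlinarith
      have h3 : 0 ≤ s * a - γ * (b - a) := by nlinarith [mul_nonneg hs0 ha.le]
      nlinarith [mul_nonneg h2 h3]
  constructor
  · rw [div_le_iff₀ hγ1, mul_comm (a^2)]
    exact key
  · rw [div_le_div_iff₀ (by linarith) two_pos]
    constructor
    · intro h; exact key.mp (by nlinarith)
    · intro h; have := key.mpr h; nlinarith
end

section
/- (Closed form of the proximal operator of the hinge loss.) Let γ > 0 and a, b ∈ ℝ, and define g : ℝ → ℝ by g(u) = max(0, 1 − a·u) + (γ/2)(u − b)². Then: (i) if a = 0, then u* = b is a global minimizer of g; (ii) if a ≠ 0 and a·b ≤ 1 − γ⁻¹a², then u* = b + γ⁻¹a is a global minimizer of g; (iii) if a ≠ 0 and 1 − γ⁻¹a² < a·b < 1, then u* = a⁻¹ is a global minimizer of g; (iv) if a ≠ 0 and a·b ≥ 1, then u* = b is a global minimizer of g. -/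
/-!
Every candidate is certified by a subgradient `s ∈ [0, 1]` of `t ↦ max 0 t` at `1 - a·u*`:
since `s·t ≤ max 0 t`, the function `g` dominates the quadratic `s·(1 - a·u) + (γ/2)(u - b)²`,
which is minimized at `u*` when `γ(u* - b) = s·a` and touches `g` there when
`max 0 (1 - a·u*) = s·(1 - a·u*)`. The four cases take `s = 1`, `1`, `γ(1 - a·b)/a²` and `0`.
-/

lemma mul_le_max_zero {s : ℝ} (hs₀ : 0 ≤ s) (hs₁ : s ≤ 1) (t : ℝ) : s * t ≤ max 0 t := by
  rcases le_total 0 t with ht | ht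
  · exact (mul_le_of_le_one_left ht hs₁).trans (le_max_right 0 t)
  · exact (mul_nonpos_of_nonneg_of_nonpos hs₀ ht).trans (le_max_left 0 t)

lemma hinge_add_sq_le_of_subgradient {γ a b s v : ℝ} (hγ : 0 ≤ γ) (hs₀ : 0 ≤ s) (hs₁ : s ≤ 1)
    (hstat : γ * (v - b) = s * a) (hcompl : max 0 (1 - a * v) = s * (1 - a * v)) (u : ℝ) :
    max 0 (1 - a * v) + γ / 2 * (v - b) ^ 2 ≤ max 0 (1 - a * u) + γ / 2 * (u - b) ^ 2 :=
  calc max 0 (1 - a * v) + γ / 2 * (v - b) ^ 2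
      = s * (1 - a * v) + γ / 2 * (v - b) ^ 2 := by rw [hcompl]
    _ ≤ s * (1 - a * v) + γ / 2 * (v - b) ^ 2 + γ / 2 * (u - v) ^ 2 := by
        have : 0 ≤ γ / 2 * (u - v) ^ 2 := by positivity
        linarith
    _ = s * (1 - a * u) + γ / 2 * (u - b) ^ 2 := by linear_combination (v - u) * hstat
    _ ≤ max 0 (1 - a * u) + γ / 2 * (u - b) ^ 2 := by
        gcongr
        exact mul_le_max_zero hs₀ hs₁ _

/-- Closed form of the proximal operator of the hinge loss
`g(u) = max(0, 1 − a·u) + (γ/2)(u − b)²`. -/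
theorem hinge_prox_closed_form (γ a b : ℝ) (hγ : 0 < γ)
    (g : ℝ → ℝ)
    (hg : ∀ u : ℝ, g u = max 0 (1 - a * u) + (γ / 2) * (u - b) ^ 2) :
    (a = 0 → ∀ u : ℝ, g b ≤ g u) ∧
    (a ≠ 0 → a * b ≤ 1 - γ⁻¹ * a ^ 2 → ∀ u : ℝ, g (b + γ⁻¹ * a) ≤ g u) ∧
    (a ≠ 0 → 1 - γ⁻¹ * a ^ 2 < a * b → a * b < 1 → ∀ u : ℝ, g a⁻¹ ≤ g u) ∧
    (a ≠ 0 → 1 ≤ a * b → ∀ u : ℝ, g b ≤ g u) := by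
  simp only [hg]
  refine ⟨fun ha u => ?_, fun _ hab u => ?_, fun ha hlo hhi u => ?_, fun _ hab u => ?_⟩
  · subst ha
    exact hinge_add_sq_le_of_subgradient (s := 1) hγ.le zero_le_one le_rfl (by ring) (by simp) u
  · have hpos : 0 ≤ 1 - a * (b + γ⁻¹ * a) := by linear_combination hab
    refine hinge_add_sq_le_of_subgradient (s := 1) hγ.le zero_le_one le_rfl ?_
      (by rw [one_mul]; exact max_eq_right hpos) u
    field_simp
    ring
  · have hgap : γ * (1 - a * b) < a ^ 2 := (lt_inv_mul_iff₀ hγ).mp (by linarith)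
    have hcut : 0 < 1 - a * b := by linarith
    refine hinge_add_sq_le_of_subgradient (s := γ * (1 - a * b) / a ^ 2) hγ.le (by positivity)
      ((div_le_one (by positivity)).mpr hgap.le) ?_ (by simp [ha]) u
    field_simp
  · exact hinge_add_sq_le_of_subgradient (s := 0) hγ.le le_rfl zero_le_one (by ring)
      (by rw [zero_mul]; exact max_eq_left (by linarith)) u
end
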